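/- There exists a constant c > 0 such that for infinitely many integers m there is a finite poset P of height 2 whose comparability graph G_P has m edges and satisfies lbox(G_P) ≥ c · √m / log₂ m. -/

import Mathlib

open Classical

/-- A finite simple graph is an interval graph if each vertex can be assigned a
closed real interval so that distinct vertices are adjacent iff their intervals
intersect. -/
def IsIntervalGraph {V : Type} (I : SimpleGraph V) : Prop :=
  ∃ l r : V → ℝ, ∀ u v : V, u ≠ v →
    (I.Adj u v ↔ (Set.Icc (l u) (r u) ∩ Set.Icc (l v) (r v)).Nonempty)

/-- A vertex is universal if it is adjacent to every other vertex. -/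
def IsUniversal {V : Type} (I : SimpleGraph V) (v : V) : Prop :=
  ∀ u : V, u ≠ v → I.Adj v u

/-- `G` has a local box representation where every vertex is non-universal in at
most `t` of the interval graphs. -/
def LocalBoxRep {V : Type} (G : SimpleGraph V) (t : ℕ) : Prop :=
  ∃ (k : ℕ) (I : Fin k → SimpleGraph V),
    (∀ i, IsIntervalGraph (I i)) ∧
    (∀ u v : V, u ≠ v → (G.Adj u v ↔ ∀ i, (I i).Adj u v)) ∧
    (∀ v : V, {i : Fin k | ¬ IsUniversal (I i) v}.ncard ≤ t)

/-- Local boxicity of a graph. -/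
noncomputable def lbox {V : Type} (G : SimpleGraph V) : ℕ :=
  sInf {t : ℕ | LocalBoxRep G t}

/-- Iterated base-2 logarithm: the number of times `logb 2` must be applied
before the result becomes at most 1. -/
noncomputable def logStar (x : ℝ) : ℕ :=
  sInf {n : ℕ | (Real.logb 2)^[n] x ≤ 1}

/-- A graph is claw-free if it has no induced `K_{1,3}`. -/
def ClawFree {V : Type} (G : SimpleGraph V) : Prop :=
  ∀ v a b c : V, a ≠ b → a ≠ c → b ≠ c →
    ¬ (G.Adj v a ∧ G.Adj v b ∧ G.Adj v c ∧ ¬ G.Adj a b ∧ ¬ G.Adj a c ∧ ¬ G.Adj b c)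

/-- Comparability graph of a poset. -/
def compGraph (α : Type) [PartialOrder α] : SimpleGraph α where
  Adj x y := x ≠ y ∧ (x ≤ y ∨ y ≤ x)
  symm := by
    constructor
    intro x y h
    exact ⟨h.1.symm, h.2.symm⟩
  loopless := by
    constructor
    intro x h
    exact h.1 rfl

/-- A partial linear extension of a poset, given as a duplicate-free list
(ordered by position) which extends the partial order on its elements. -/
def IsPLE {α : Type} [PartialOrder α] [DecidableEq α] (L : List α) : Prop :=
  L.Nodup ∧ ∀ x ∈ L, ∀ y ∈ L, x ≤ y → L.idxOf x ≤ L.idxOf y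

/-- `x` appears below `y` in the list `L`. -/
def Below {α : Type} [DecidableEq α] (L : List α) (x y : α) : Prop :=
  x ∈ L ∧ y ∈ L ∧ L.idxOf x < L.idxOf y

/-- A local realizer of a poset: a family of ple's such that every strict
relation is witnessed, and every incomparable pair is reversed twice. -/
def IsLocalRealizer {α : Type} [PartialOrder α] [DecidableEq α] {k : ℕ}
    (L : Fin k → List α) : Prop :=
  (∀ i, IsPLE (L i)) ∧
  (∀ x y : α, x < y → ∃ i, Below (L i) x y) ∧
  (∀ x y : α, ¬ x ≤ y → ¬ y ≤ x →
    (∃ i, Below (L i) x y) ∧ (∃ i, Below (L i) y x))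

/-- Local dimension of a poset: the least `t` such that some local realizer has
every element in at most `t` ple's. -/
noncomputable def ldim (α : Type) [PartialOrder α] [DecidableEq α] : ℕ :=
  sInf {t : ℕ | ∃ (k : ℕ) (L : Fin k → List α), IsLocalRealizer L ∧
    ∀ x : α, {i : Fin k | x ∈ L i}.ncard ≤ t}

/-- Product dimension of a graph. -/
noncomputable def prodDim {V : Type} (G : SimpleGraph V) : ℕ :=
  sInf {k : ℕ | 0 < k ∧ ∃ f : V → Fin k → ℕ,
    ∀ u v : V, u ≠ v → (G.Adj u v ↔ ∀ i, f u i ≠ f v i)}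

/-- A poset has height at most 2: every chain has at most 2 elements. -/
def HeightAtMostTwo (α : Type) [Preorder α] : Prop :=
  ∀ x y z : α, x ≤ y → y ≤ z → x = y ∨ y = z

/-!
A local box representation in which every vertex is non-universal in at most `t` interval graphs
is determined by a short code: for each vertex, the at most `t` interval graphs in which it is
non-universal (only `|V| t` of them matter at all), and its interval in each, whose endpoints
count only through their relative order among `2 |V|` values. Hence at most
`(4 |V|³ t + 1) ^ (t |V|)` graphs on `V` have local boxicity at most `t`. On `Fin n ⊕ Fin n`
with `n = 2 ^ (k + 1)` there are `C(n², n² / 2) > 2 ^ (n² / 2)` bipartite height-two posets with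
`m = n² / 2` comparabilities, more than the count for `t = ⌊n / (100 log₂ n)⌋`, so one of
them has local boxicity above `t`, and `t + 1 ≥ √m / (100 log₂ m)`.
-/

open Finset

section IntervalGraph

variable {V : Type}

def intervalGraph (l r : V → ℝ) : SimpleGraph V :=
  SimpleGraph.fromRel fun u v => (Set.Icc (l u) (r u) ∩ Set.Icc (l v) (r v)).Nonempty

lemma isIntervalGraph_intervalGraph (l r : V → ℝ) : IsIntervalGraph (intervalGraph l r) :=
  ⟨l, r, fun u v huv => by simp [intervalGraph, huv, Set.inter_comm]⟩

def separatingGraph [DecidableEq V] (a b : V) : SimpleGraph V :=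
  intervalGraph (fun v => if v = b then 2 else 0) (fun v => if v = a then 1 else 3)

lemma separatingGraph_adj [DecidableEq V] {a b : V} (hab : a ≠ b) {u v : V} :
    (separatingGraph a b).Adj u v ↔ u ≠ v ∧ s(u, v) ≠ s(a, b) := by
  simp only [separatingGraph, intervalGraph, SimpleGraph.fromRel_adj, Set.Icc_inter_Icc,
    Set.nonempty_Icc]
  by_cases hua : u = a <;> by_cases hub : u = b <;> by_cases hva : v = a <;>
    by_cases hvb : v = b <;> simp_all <;> norm_num

lemma exists_localBoxRep [Finite V] (G : SimpleGraph V) : ∃ t, LocalBoxRep G t := by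
  have := Fintype.ofFinite V
  let NonEdge := {p : V × V // p.1 ≠ p.2 ∧ ¬ G.Adj p.1 p.2}
  let e := (Fintype.equivFin NonEdge).symm
  refine ⟨Fintype.card NonEdge, Fintype.card NonEdge,
    fun i => separatingGraph (e i).1.1 (e i).1.2,
    fun i => isIntervalGraph_intervalGraph _ _, fun u v huv => ⟨fun h i => ?_, fun h => ?_⟩,
    fun v => (Set.ncard_le_card _).trans (by simp)⟩
  · dsimp only
    generalize e i = p
    obtain ⟨⟨a, b⟩, hab, hGab⟩ := p
    rw [separatingGraph_adj hab]
    refine ⟨huv, fun he => hGab ?_⟩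
    rcases Sym2.eq_iff.1 he with ⟨rfl, rfl⟩ | ⟨rfl, rfl⟩
    exacts [h, h.symm]
  · by_contra hG
    have := h (e.symm ⟨(u, v), huv, hG⟩)
    simp [separatingGraph_adj huv] at this

lemma LocalBoxRep.mono {G : SimpleGraph V} {t t' : ℕ} (h : LocalBoxRep G t) (htt' : t ≤ t') :
    LocalBoxRep G t' :=
  let ⟨k, I, hI, hG, ht⟩ := h
  ⟨k, I, hI, hG, fun v => (ht v).trans htt'⟩

lemma localBoxRep_lbox [Finite V] (G : SimpleGraph V) : LocalBoxRep G (lbox G) :=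
  Nat.sInf_mem (exists_localBoxRep G)

lemma lt_lbox_of_not_localBoxRep [Finite V] {G : SimpleGraph V} {t : ℕ}
    (h : ¬ LocalBoxRep G t) : t < lbox G :=
  lt_of_not_ge fun hle => h ((localBoxRep_lbox G).mono hle)

/-- Only the relative order of the at most `2 |V|` endpoints matters. -/
lemma IsIntervalGraph.exists_fin_endpoints [Fintype V] {I : SimpleGraph V}
    (hI : IsIntervalGraph I) :
    ∃ l r : V → Fin (2 * Fintype.card V),
      ∀ u v, u ≠ v → (I.Adj u v ↔ l u ⊔ l v ≤ r u ⊓ r v) := by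
  obtain ⟨l, r, hlr⟩ := hI
  let F : Finset ℝ := univ.image l ∪ univ.image r
  have hF : #F ≤ 2 * Fintype.card V := by
    grw [card_union_le, card_image_le, card_image_le, card_univ, two_mul]
  let φ : F ↪o Fin (2 * Fintype.card V) :=
    (F.orderIsoOfFin rfl).symm.toOrderEmbedding.trans (Fin.castLEOrderEmb hF)
  have hlF v : l v ∈ F := mem_union_left _ (mem_image_of_mem _ (mem_univ v))
  have hrF v : r v ∈ F := mem_union_right _ (mem_image_of_mem _ (mem_univ v))
  refine ⟨fun v => φ ⟨l v, hlF v⟩, fun v => φ ⟨r v, hrF v⟩, fun u v huv => ?_⟩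
  simp only [hlr u v huv, Set.Icc_inter_Icc, Set.nonempty_Icc, sup_le_iff, le_inf_iff,
    φ.le_iff_le, Subtype.mk_le_mk]

end IntervalGraph

section Code

variable (V : Type) [Fintype V]

/-- Slot `j` of vertex `v` may hold one interval graph in which `v` is non-universal: a
renumbering of it (at most `|V| t` of them have a non-universal vertex) together with the
discretized endpoints of the interval of `v` there. -/
abbrev LocalBoxCode (t : ℕ) : Type :=
  V → Fin t →
    Option (Fin (Fintype.card V * t) × Fin (2 * Fintype.card V) × Fin (2 * Fintype.card V))

variable {V}

/-- Some interval graph recorded at both `u` and `v` has disjoint intervals for them. -/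
def LocalBoxCode.Separates {t : ℕ} (g : LocalBoxCode V t) (u v : V) : Prop :=
  ∃ j j' p q, g u j = some p ∧ g v j' = some q ∧ p.1 = q.1 ∧
    ¬ p.2.1 ⊔ q.2.1 ≤ p.2.2 ⊓ q.2.2

lemma LocalBoxRep.exists_code {G : SimpleGraph V} {t : ℕ} (h : LocalBoxRep G t) :
    ∃ g : LocalBoxCode V t, ∀ u v, u ≠ v → (G.Adj u v ↔ ¬ g.Separates u v) := by
  obtain ⟨k, I, hI, hG, ht⟩ := h
  choose l r hlr using fun i => (hI i).exists_fin_endpoints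
  let F : V → Finset (Fin k) := fun v => {i | ¬ IsUniversal (I i) v}
  have hF v : #(F v) ≤ t := by simpa [F, ← Set.ncard_coe_finset] using ht v
  let T := univ.biUnion F
  have hT : Fintype.card T ≤ Fintype.card (Fin (Fintype.card V * t)) := by
    grw [Fintype.card_fin, Fintype.card_coe, card_biUnion_le,
      sum_le_card_nsmul _ _ t fun v _ => hF v, card_univ, smul_eq_mul]
  obtain ⟨τ⟩ := Function.Embedding.nonempty_of_card_le hT
  have σ v : F v ↪ Fin t := (Function.Embedding.nonempty_of_card_le (by simpa using hF v)).some
  have hFT {v i} (hi : i ∈ F v) : i ∈ T := mem_biUnion.2 ⟨v, mem_univ _, hi⟩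
  let g : LocalBoxCode V t := fun v j => (Function.partialInv (σ v) j).map
    fun i : F v => (τ ⟨i, hFT i.2⟩, l i v, r i v)
  have hg {v j p} :
      g v j = some p ↔ ∃ i : F v, σ v i = j ∧ (τ ⟨i, hFT i.2⟩, l i v, r i v) = p := by
    simp only [g, Option.map_eq_some_iff, (σ v).injective.isPartialInv _ j]
  have hmemF {i u v} (huv : u ≠ v) (hi : ¬ (I i).Adj u v) : i ∈ F u ∧ i ∈ F v :=
    ⟨mem_filter.2 ⟨mem_univ _, fun h => hi (h v huv.symm)⟩,
      mem_filter.2 ⟨mem_univ _, fun h => hi (h u huv).symm⟩⟩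
  refine ⟨g, fun u v huv => ?_⟩
  rw [hG u v huv, ← not_exists_not, not_iff_not]
  constructor
  · rintro ⟨i, hi⟩
    obtain ⟨hiu, hiv⟩ := hmemF huv hi
    exact ⟨_, _, _, _, hg.2 ⟨⟨i, hiu⟩, rfl, rfl⟩, hg.2 ⟨⟨i, hiv⟩, rfl, rfl⟩, rfl,
      (hlr i u v huv).not.1 hi⟩
  · rintro ⟨j, j', p, q, hp, hq, hpq, hsep⟩
    obtain ⟨⟨i, _⟩, -, rfl⟩ := hg.1 hp
    obtain ⟨⟨i', _⟩, -, rfl⟩ := hg.1 hq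
    obtain rfl : i = i' := congrArg Subtype.val (τ.injective hpq)
    exact ⟨i, (hlr i u v huv).not.2 hsep⟩

lemma card_localBoxRep_le (t : ℕ) :
    Nat.card {G : SimpleGraph V // LocalBoxRep G t} ≤ Nat.card (LocalBoxCode V t) := by
  choose g hg using fun G : {G : SimpleGraph V // LocalBoxRep G t} => G.2.exists_code
  refine Nat.card_le_card_of_injective g fun G G' hGG' => Subtype.ext ?_
  ext u v
  by_cases huv : u = v
  · simp [huv]
  · rw [hg G u v huv, hg G' u v huv, hGG']

end Code

section Bipartite

variable {α β : Type}

@[reducible]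
def bipartiteOrder (H : Finset (α × β)) : PartialOrder (α ⊕ β) where
  le a b := a = b ∨ ∃ x y, a = .inl x ∧ b = .inr y ∧ (x, y) ∈ H
  le_refl a := .inl rfl
  le_trans a b c := by
    rintro (rfl | ⟨x, y, rfl, rfl, hxy⟩) hbc
    · exact hbc
    · rcases hbc with rfl | ⟨x', y', h, -⟩
      exacts [.inr ⟨x, y, rfl, rfl, hxy⟩, Sum.inr_ne_inl h |>.elim]
  le_antisymm a b := by
    rintro (rfl | ⟨x, y, rfl, rfl, -⟩) (h | ⟨x', y', h, -⟩)
    exacts [rfl, rfl, h.symm, Sum.inr_ne_inl h |>.elim]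

lemma bipartiteOrder_le_iff (H : Finset (α × β)) {a b : α ⊕ β} :
    @LE.le _ (bipartiteOrder H).toLE a b ↔
      a = b ∨ ∃ x y, a = .inl x ∧ b = .inr y ∧ (x, y) ∈ H :=
  Iff.rfl

lemma heightAtMostTwo_bipartiteOrder (H : Finset (α × β)) :
    @HeightAtMostTwo _ (bipartiteOrder H).toPreorder := by
  rintro a b c (rfl | ⟨x, y, rfl, rfl, -⟩) (rfl | ⟨x', y', h, -⟩)
  exacts [.inl rfl, .inl rfl, .inr rfl, Sum.inr_ne_inl h |>.elim]

lemma compGraph_bipartiteOrder_adj (H : Finset (α × β)) {a b : α ⊕ β} :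
    (@compGraph _ (bipartiteOrder H)).Adj a b ↔
      ∃ p ∈ H, s(Sum.inl p.1, Sum.inr p.2) = s(a, b) := by
  rcases a with x | y <;> rcases b with x' | y' <;> simp [compGraph, bipartiteOrder_le_iff, eq_comm]

lemma compGraph_bipartiteOrder_adj_inl_inr (H : Finset (α × β)) (x : α) (y : β) :
    (@compGraph _ (bipartiteOrder H)).Adj (.inl x) (.inr y) ↔ (x, y) ∈ H := by
  simp [compGraph_bipartiteOrder_adj]

lemma ncard_edgeSet_compGraph_bipartiteOrder (H : Finset (α × β)) :
    (@compGraph _ (bipartiteOrder H)).edgeSet.ncard = #H := by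
  have hinj : Function.Injective fun p : α × β => s(Sum.inl p.1, Sum.inr p.2) := by
    rintro ⟨x, y⟩ ⟨x', y'⟩ h
    simpa using h
  have hE : (@compGraph _ (bipartiteOrder H)).edgeSet =
      (fun p : α × β => s(.inl p.1, .inr p.2)) '' H := by
    ext e
    induction e using Sym2.ind
    simp [compGraph_bipartiteOrder_adj]
  rw [hE, Set.ncard_image_of_injective _ hinj, Set.ncard_coe_finset]

end Bipartite

lemma exists_not_localBoxRep_compGraph_bipartiteOrder {α β : Type} [Fintype α] [Fintype β]
    {t m : ℕ}
    (hcount :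
      Nat.card (LocalBoxCode (α ⊕ β) t) < (Fintype.card α * Fintype.card β).choose m) :
    ∃ H : Finset (α × β), #H = m ∧ ¬ LocalBoxRep (@compGraph _ (bipartiteOrder H)) t := by
  by_contra! hrep
  let f (H : {H : Finset (α × β) // #H = m}) :
      {G : SimpleGraph (α ⊕ β) // LocalBoxRep G t} :=
    ⟨@compGraph _ (bipartiteOrder H.1), hrep H.1 H.2⟩
  have hf : Function.Injective f := fun H H' hHH' => Subtype.ext <| Finset.ext fun ⟨x, y⟩ => by
    rw [← compGraph_bipartiteOrder_adj_inl_inr, ← compGraph_bipartiteOrder_adj_inl_inr,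
      show @compGraph _ (bipartiteOrder H.1) = @compGraph _ (bipartiteOrder H'.1) from
        congrArg Subtype.val hHH']
  have := (Nat.card_le_card_of_injective f hf).trans (card_localBoxRep_le t)
  rw [Nat.card_eq_fintype_card, Fintype.card_finset_len, Fintype.card_prod] at this
  exact hcount.not_ge this

lemma card_localBoxCode (V : Type) [Fintype V] (t : ℕ) :
    Nat.card (LocalBoxCode V t) =
      (Fintype.card V * t * (2 * Fintype.card V) ^ 2 + 1) ^ (t * Fintype.card V) := by
  simp [Nat.card_eq_fintype_card, pow_mul, sq, mul_assoc]

lemma two_pow_lt_centralBinom {m : ℕ} (hm : 4 ≤ m) : 2 ^ m < m.centralBinom := by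
  refine Nat.lt_of_mul_lt_mul_left (a := m) ?_
  refine lt_of_le_of_lt ?_ (Nat.four_pow_lt_mul_centralBinom m hm)
  calc m * 2 ^ m ≤ 2 ^ m * 2 ^ m := Nat.mul_le_mul_right _ m.lt_two_pow_self.le
    _ = 4 ^ m := by rw [← mul_pow]; norm_num

lemma code_count_le_two_pow {a n t m : ℕ} (ha : 1 ≤ a) (hn : n ≤ 2 ^ a)
    (hat : 100 * a * t ≤ n) (hm : n * n ≤ 2 * m) :
    (2 * n * t * (2 * (2 * n)) ^ 2 + 1) ^ (t * (2 * n)) ≤ 2 ^ m := by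
  have htn : t ≤ n := by nlinarith
  have hbase : 2 * n * t * (2 * (2 * n)) ^ 2 + 1 ≤ 2 ^ (10 * a) :=
    calc 2 * n * t * (2 * (2 * n)) ^ 2 + 1 ≤ 32 * n ^ 4 + 1 := by
          have := Nat.mul_le_mul_left (32 * n ^ 3) htn
          nlinarith
      _ ≤ 32 * (2 ^ a) ^ 4 + 1 := by gcongr
      _ ≤ 2 ^ 6 * (2 ^ a) ^ 4 := by
          have : 1 ≤ (2 ^ a) ^ 4 := Nat.one_le_pow _ _ (by positivity)
          omega
      _ = 2 ^ (6 + 4 * a) := by ring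
      _ ≤ 2 ^ (10 * a) := Nat.pow_le_pow_right (by norm_num) (by omega)
  have hexp : 10 * a * (t * (2 * n)) ≤ m := by
    have := Nat.mul_le_mul_right n hat
    nlinarith
  calc (2 * n * t * (2 * (2 * n)) ^ 2 + 1) ^ (t * (2 * n))
      ≤ (2 ^ (10 * a)) ^ (t * (2 * n)) := Nat.pow_le_pow_left hbase _
    _ = 2 ^ (10 * a * (t * (2 * n))) := by rw [← pow_mul]
    _ ≤ 2 ^ m := Nat.pow_le_pow_right (by norm_num) hexp

lemma sqrt_div_logb_le {k t : ℕ} (ht : 2 ^ (k + 1) < 100 * (k + 1) * (t + 1)) :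
    1 / 100 * √((2 ^ (2 * k + 1) : ℕ) : ℝ) / Real.logb 2 ((2 ^ (2 * k + 1) : ℕ) : ℝ) ≤
      t + 1 := by
  have hlog : Real.logb 2 ((2 ^ (2 * k + 1) : ℕ) : ℝ) = 2 * k + 1 := by
    push_cast
    rw [Real.logb_pow, Real.logb_self_eq_one (by norm_num)]
    push_cast
    ring
  have hsqrt : √((2 ^ (2 * k + 1) : ℕ) : ℝ) ≤ 2 ^ (k + 1) := by
    rw [Real.sqrt_le_iff]
    refine ⟨by positivity, ?_⟩
    push_cast
    rw [← pow_mul]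
    exact pow_le_pow_right₀ (by norm_num) (by omega)
  have ht' : (2 : ℝ) ^ (k + 1) < 100 * (k + 1) * (t + 1) := by exact_mod_cast ht
  rw [hlog, div_le_iff₀ (by positivity)]
  nlinarith [Real.sqrt_nonneg ((2 ^ (2 * k + 1) : ℕ) : ℝ), (k.cast_nonneg : (0 : ℝ) ≤ k),
    (t.cast_nonneg : (0 : ℝ) ≤ t)]

/-- ∃ c > 0 such that for infinitely many m there is a finite
height-2 poset whose comparability graph has m edges and local boxicity at
least c·√m/log₂ m. -/
theorem stmt13 : ∃ c : ℝ, 0 < c ∧ ∀ N : ℕ, ∃ m : ℕ, N ≤ m ∧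
    ∃ (α : Type) (_ : Fintype α) (instp : PartialOrder α),
      @HeightAtMostTwo α instp.toPreorder ∧
      (@compGraph α instp).edgeSet.ncard = m ∧
      c * Real.sqrt (m : ℝ) / Real.logb 2 (m : ℝ) ≤
        (lbox (@compGraph α instp) : ℝ) := by
  refine ⟨1 / 100, by norm_num, fun N => ?_⟩
  set k := N + 1
  set n := 2 ^ (k + 1)
  set m := 2 ^ (2 * k + 1)
  set t := n / (100 * (k + 1))
  have hnm : n * n = 2 * m := by simp only [n, m, ← pow_add, ← pow_succ']; ring_nf
  have hcount : Nat.card (LocalBoxCode (Fin n ⊕ Fin n) t) <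
      (Fintype.card (Fin n) * Fintype.card (Fin n)).choose m := by
    rw [card_localBoxCode, Fintype.card_sum, Fintype.card_fin, ← two_mul, hnm,
      ← Nat.centralBinom_eq_two_mul_choose]
    have hm : 2 ^ 3 ≤ m := Nat.pow_le_pow_right two_pos (by omega)
    exact (code_count_le_two_pow (a := k + 1) (by omega) le_rfl (Nat.mul_div_le n _)
      hnm.le).trans_lt (two_pow_lt_centralBinom (by omega))
  obtain ⟨H, hH, hrep⟩ := exists_not_localBoxRep_compGraph_bipartiteOrder hcount
  refine ⟨m, ?_, Fin n ⊕ Fin n, inferInstance, bipartiteOrder H,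
    heightAtMostTwo_bipartiteOrder H, by rw [ncard_edgeSet_compGraph_bipartiteOrder, hH], ?_⟩
  · exact N.lt_two_pow_self.le.trans (Nat.pow_le_pow_right two_pos (by omega))
  · calc _ ≤ (t : ℝ) + 1 := sqrt_div_logb_le (Nat.lt_mul_div_succ n (by positivity))
      _ ≤ lbox (@compGraph _ (bipartiteOrder H)) := by
        exact_mod_cast lt_lbox_of_not_localBoxRep hrep
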